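/- Let m, p be natural numbers, Q₁ a real m×m matrix with Q₁ᵀ = Q₁, Q₂ a real m×p matrix, and Q₄ a real p×p matrix with Q₄ᵀ = Q₄ and Q₄ invertible, and let w ∈ ℝ^p. Define Q_red(τ) := Q₁ - Q₂ * (Q₄ + τ • (w wᵀ))⁻¹ * Q₂ᵀ and Q_ac := -(Q₂ * Q₄⁻¹). Suppose λ : ℝ → ℝ and u : ℝ → ℝ^m are differentiable at 0, for all τ in some neighborhood of 0 the eigen-equation Q_red(τ) *ᵥ u(τ) = λ(τ) • u(τ) holds, and u(0) ⬝ᵥ u(0) = 1. Then λ'(0) = (u(0) ⬝ᵥ (Q_ac *ᵥ w))²; in particular λ'(0) ≥ 0, i.e. increasing the susceptance of any line in the interior network (w = e_i - e_j) or of any interior self-loop to the infinite bus (w = e_i) can never decrease an eigenvalue of the Kron-reduced grounded Laplacian. -/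

import Mathlib

/-!
By Sherman–Morrison, near `τ = 0` the perturbed Kron reduction is a rank-one update of the
unperturbed one, `Q_red(τ) = Q_red(0) + s(τ) • a aᵀ` with `s(τ) = τ / (1 + τ wᵀ Q₄⁻¹ w)` and
`a = Q₂ Q₄⁻¹ w = -Q_ac w`.
Pairing the eigen-equation with `u(0)` and using the symmetry of `Q_red(0)` gives the scalar
identity `λ(0) u(0)ᵀu(τ) + s(τ) (u(0)ᵀa) (aᵀu(τ)) = λ(τ) u(0)ᵀu(τ)`, whose derivative at `0`
no longer involves `u'(0)` and yields `λ'(0) = (u(0)ᵀa)²`.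
-/

open Matrix Filter Topology

theorem Matrix.inv_add_vecMulVec {K n : Type*} [Field K] [Fintype n] [DecidableEq n]
    {A : Matrix n n K} (hA : IsUnit A.det) {x y : n → K} (h : 1 + y ⬝ᵥ (A⁻¹ *ᵥ x) ≠ 0) :
    (A + vecMulVec x y)⁻¹ =
      A⁻¹ - (1 + y ⬝ᵥ (A⁻¹ *ᵥ x))⁻¹ • vecMulVec (A⁻¹ *ᵥ x) (y ᵥ* A⁻¹) := by
  refine inv_eq_right_inv ?_
  rw [add_mul, mul_sub, mul_sub, mul_nonsing_inv A hA, Matrix.mul_smul, Matrix.mul_smul,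
    mul_vecMulVec, mulVec_mulVec, mul_nonsing_inv A hA, one_mulVec, vecMulVec_mul,
    vecMulVec_mul_vecMulVec, vecMulVec_smul]
  linear_combination (norm := module) (inv_mul_cancel₀ h).symm • vecMulVec x (y ᵥ* A⁻¹)

theorem Matrix.dotProduct_vecMulVec_mulVec {R n : Type*} [CommSemiring R] [Fintype n]
    (u a b v : n → R) : u ⬝ᵥ (vecMulVec a b *ᵥ v) = (u ⬝ᵥ a) * (b ⬝ᵥ v) := by
  rw [dotProduct_mulVec, vecMul_vecMulVec, smul_dotProduct, smul_eq_mul]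

section KronReduction

variable {K m n : Type*} [Field K] [Fintype n] [DecidableEq n]

noncomputable def kronReduction (Q₁ : Matrix m m K) (Q₂ : Matrix m n K) (Q₄ : Matrix n n K) :
    Matrix m m K :=
  Q₁ - Q₂ * Q₄⁻¹ * Q₂ᵀ

theorem kronReduction_isSymm {Q₁ : Matrix m m K} {Q₄ : Matrix n n K} (hQ₁ : Q₁.IsSymm)
    (hQ₄ : Q₄.IsSymm) (Q₂ : Matrix m n K) : (kronReduction Q₁ Q₂ Q₄).IsSymm := by
  rw [IsSymm, kronReduction, transpose_sub, transpose_mul, transpose_mul, transpose_transpose,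
    transpose_nonsing_inv, hQ₁.eq, hQ₄.eq, Matrix.mul_assoc]

theorem kronReduction_add_smul_vecMulVec (Q₁ : Matrix m m K) (Q₂ : Matrix m n K)
    {Q₄ : Matrix n n K} (hQ₄ : Q₄.IsSymm) (hQ₄_det : IsUnit Q₄.det) {w : n → K} {τ : K}
    (h : 1 + τ * (w ⬝ᵥ (Q₄⁻¹ *ᵥ w)) ≠ 0) :
    kronReduction Q₁ Q₂ (Q₄ + τ • vecMulVec w w) =
      kronReduction Q₁ Q₂ Q₄ + (τ / (1 + τ * (w ⬝ᵥ (Q₄⁻¹ *ᵥ w)))) •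
        vecMulVec ((Q₂ * Q₄⁻¹) *ᵥ w) ((Q₂ * Q₄⁻¹) *ᵥ w) := by
  have h' : 1 + w ⬝ᵥ (Q₄⁻¹ *ᵥ (τ • w)) ≠ 0 := by rwa [mulVec_smul, dotProduct_smul]
  have hvec : w ᵥ* Q₄⁻¹ = Q₄⁻¹ *ᵥ w := by
    rw [← mulVec_transpose, transpose_nonsing_inv, hQ₄.eq]
  rw [kronReduction, ← smul_vecMulVec, inv_add_vecMulVec hQ₄_det h', hvec, kronReduction,
    Matrix.mul_sub, Matrix.sub_mul, Matrix.mul_smul, Matrix.smul_mul, mul_vecMulVec,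
    vecMulVec_mul, vecMul_transpose, mulVec_mulVec, mulVec_mulVec, mulVec_smul, mulVec_smul,
    dotProduct_smul, smul_vecMulVec, smul_smul, smul_eq_mul, div_eq_inv_mul]
  abel

end KronReduction

section HellmannFeynman

variable {𝕜 n : Type*} [NontriviallyNormedField 𝕜] [Fintype n]

theorem HasDerivAt.const_dotProduct {u : 𝕜 → n → 𝕜} {u' : n → 𝕜} {t : 𝕜} (v : n → 𝕜)
    (hu : HasDerivAt u u' t) : HasDerivAt (fun τ => v ⬝ᵥ u τ) (v ⬝ᵥ u') t := by
  simpa only [dotProduct] using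
    HasDerivAt.fun_sum fun i _ => ((hasDerivAt_pi.1 hu) i).const_mul (v i)

/-- Hellmann–Feynman along the path `A + s τ • B`: pairing the eigen-equation with `u t`
and using the symmetry of `A` removes the unknown derivative of the eigenvector. -/
theorem deriv_eigenvalue_add_smul {A B : Matrix n n 𝕜} (hA : A.IsSymm) {s : 𝕜 → 𝕜}
    {s' t : 𝕜} (hs : HasDerivAt s s' t) (hst : s t = 0) {lam : 𝕜 → 𝕜} {u : 𝕜 → n → 𝕜}
    (hlam : DifferentiableAt 𝕜 lam t) (hu : DifferentiableAt 𝕜 u t)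
    (heig : ∀ᶠ τ in 𝓝 t, (A + s τ • B) *ᵥ u τ = lam τ • u τ) (hnorm : u t ⬝ᵥ u t = 1) :
    deriv lam t = s' * (u t ⬝ᵥ (B *ᵥ u t)) := by
  set u₀ := u t
  have hAu₀ : A *ᵥ u₀ = lam t • u₀ := by simpa [hst] using heig.self_of_nhds
  have hpair : ∀ x, u₀ ⬝ᵥ (A *ᵥ x) = lam t * (u₀ ⬝ᵥ x) := fun x => by
    rw [dotProduct_mulVec, ← mulVec_transpose, hA.eq, hAu₀, smul_dotProduct, smul_eq_mul]
  have hscalar : (fun τ => lam t * (u₀ ⬝ᵥ u τ) + s τ * ((u₀ ᵥ* B) ⬝ᵥ u τ)) =ᶠ[𝓝 t]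
      fun τ => lam τ * (u₀ ⬝ᵥ u τ) := by
    filter_upwards [heig] with τ hτ
    have := congrArg (u₀ ⬝ᵥ ·) hτ
    simpa only [add_mulVec, smul_mulVec, dotProduct_add, dotProduct_smul, smul_eq_mul,
      hpair, dotProduct_mulVec] using this
  have hu' := hu.hasDerivAt
  have hlhs := ((hu'.const_dotProduct u₀).const_mul (lam t)).add
    (hs.mul (hu'.const_dotProduct (u₀ ᵥ* B)))
  have hrhs := hlam.hasDerivAt.mul (hu'.const_dotProduct u₀)
  have := (hlhs.congr_of_eventuallyEq hscalar.symm).unique hrhs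
  rw [hst, hnorm, ← dotProduct_mulVec] at this
  linear_combination -this

end HellmannFeynman

/-- Section IV-C of the paper: for a symmetric grounded Laplacian, the sensitivity of an
eigenvalue of the Kron-reduced matrix to any interior susceptance perturbation
`τ • w wᵀ` equals `(u(0)ᵀ Q_ac w)² ≥ 0`; increasing the susceptance of any line in the
interior network can never decrease an eigenvalue of the Kron-reduced grounded
Laplacian. -/
theorem interior_sensitivity_nonneg {m p : ℕ}
    (Q1 : Matrix (Fin m) (Fin m) ℝ) (hQ1sym : Q1ᵀ = Q1)
    (Q2 : Matrix (Fin m) (Fin p) ℝ)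
    (Q4 : Matrix (Fin p) (Fin p) ℝ) (hQ4sym : Q4ᵀ = Q4) (hQ4 : IsUnit Q4.det)
    (w : Fin p → ℝ)
    (Qred : ℝ → Matrix (Fin m) (Fin m) ℝ)
    (hQred : ∀ τ : ℝ, Qred τ = Q1 - Q2 * (Q4 + τ • vecMulVec w w)⁻¹ * Q2ᵀ)
    (Qac : Matrix (Fin m) (Fin p) ℝ) (hQac : Qac = -(Q2 * Q4⁻¹))
    (lam : ℝ → ℝ) (u : ℝ → (Fin m → ℝ))
    (hlam : DifferentiableAt ℝ lam 0) (hu : DifferentiableAt ℝ u 0)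
    (heig : ∀ᶠ τ : ℝ in nhds 0, Qred τ *ᵥ u τ = lam τ • u τ)
    (hnorm : u 0 ⬝ᵥ u 0 = 1) :
    deriv lam 0 = (u 0 ⬝ᵥ (Qac *ᵥ w)) ^ 2 ∧ 0 ≤ deriv lam 0 := by
  set a := (Q2 * Q4⁻¹) *ᵥ w
  set d := w ⬝ᵥ (Q4⁻¹ *ᵥ w)
  have hden : ∀ᶠ τ : ℝ in 𝓝 0, 1 + τ * d ≠ 0 :=
    (continuous_const.add (continuous_id.mul continuous_const)).continuousAt.eventually_ne
      (by simp)
  have hpath : ∀ᶠ τ : ℝ in 𝓝 0,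
      (kronReduction Q1 Q2 Q4 + (τ / (1 + τ * d)) • vecMulVec a a) *ᵥ u τ = lam τ • u τ := by
    filter_upwards [hden, heig] with τ hτ heigτ
    rwa [← kronReduction_add_smul_vecMulVec Q1 Q2 hQ4sym hQ4 hτ, kronReduction, ← hQred]
  have hs : HasDerivAt (fun τ : ℝ => τ / (1 + τ * d)) 1 0 := by
    simpa using (hasDerivAt_id' (0 : ℝ)).fun_div
      (((hasDerivAt_id' 0).mul_const d).const_add 1) (by simp)
  have hderiv : deriv lam 0 = (u 0 ⬝ᵥ a) ^ 2 := by
    rw [deriv_eigenvalue_add_smul (kronReduction_isSymm hQ1sym hQ4sym Q2) hs (by simp) hlam hu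
      hpath hnorm, dotProduct_vecMulVec_mulVec, dotProduct_comm a]
    ring
  have hQac_w : u 0 ⬝ᵥ (Qac *ᵥ w) = -(u 0 ⬝ᵥ a) := by
    rw [hQac, neg_mulVec, dotProduct_neg]
  exact ⟨by rw [hderiv, hQac_w, neg_sq], hderiv ▸ sq_nonneg _⟩
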